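/- Define g : ℝ → ℝ by g(p) = l·p·G⁻¹(χ log|p|) for p ≠ 0 and g(0) = 0, where l, χ > 0 and G⁻¹ is as above. Then g is continuously differentiable on ℝ with g(0) = 0 and g'(0) = 0, and g maps [0,∞) into [0,∞). -/

import Mathlib

/-!
Write `g p = l · p · φ p` with `φ p = G⁻¹(χ log p)` (Lean's `log |p| = log p`, and the factor `p`
kills the junk value of `φ 0`). Since `χ log p → -∞` as `p → 0`, both `φ p → 0` and
`p φ' p = χ (G⁻¹)'(χ log p) → 0`, because `(G⁻¹)' = G⁻¹ / (α + d ∘ G⁻¹)` vanishes at `-∞` too.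
These two limits are exactly what makes `p ↦ p φ p` continuously differentiable across `0`,
with derivative `0` there.
-/

open Filter Topology Real

section MulSelf

variable {φ : ℝ → ℝ}

theorem hasDerivAt_mul_self_zero (hφ : Tendsto φ (𝓝[≠] 0) (𝓝 0)) :
    HasDerivAt (fun x => x * φ x) 0 0 := by
  rw [hasDerivAt_iff_tendsto_slope]
  refine hφ.congr' ?_
  filter_upwards [self_mem_nhdsWithin] with x (hx : x ≠ 0)
  rw [slope_def_field]
  field_simp
  ring

theorem contDiff_one_mul_self (hφ : Tendsto φ (𝓝[≠] 0) (𝓝 0))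
    (hφC1 : ContDiffOn ℝ 1 φ {0}ᶜ)
    (hφ' : Tendsto (fun x => x * deriv φ x) (𝓝[≠] 0) (𝓝 0)) :
    ContDiff ℝ 1 (fun x => x * φ x) := by
  have hderiv : ∀ x ≠ 0, HasDerivAt (fun x => x * φ x) (φ x + x * deriv φ x) x := by
    intro x hx
    have hφx : DifferentiableAt ℝ φ x :=
      (hφC1.differentiableOn one_ne_zero).differentiableAt (isOpen_ne.mem_nhds hx)
    simpa only [one_mul] using (hasDerivAt_id' x).fun_mul hφx.hasDerivAt
  have hderiv_eq : ∀ᶠ x in 𝓝[≠] 0, deriv (fun x => x * φ x) x = φ x + x * deriv φ x := by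
    filter_upwards [self_mem_nhdsWithin] with x hx using (hderiv x hx).deriv
  have hcont_ne : ContinuousOn (fun x => φ x + x * deriv φ x) {0}ᶜ :=
    hφC1.continuousOn.add
      (continuousOn_id.mul (hφC1.continuousOn_deriv_of_isOpen isOpen_compl_singleton le_rfl))
  rw [contDiff_one_iff_deriv]
  refine ⟨fun x => ?_, continuous_iff_continuousAt.2 fun x => ?_⟩
  · rcases eq_or_ne x 0 with rfl | hx
    · exact (hasDerivAt_mul_self_zero hφ).differentiableAt
    · exact (hderiv x hx).differentiableAt
  · rcases eq_or_ne x 0 with rfl | hx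
    · rw [← continuousWithinAt_compl_self, ContinuousWithinAt,
        (hasDerivAt_mul_self_zero hφ).deriv]
      simpa using (hφ.add hφ').congr' (hderiv_eq.mono fun x hx => hx.symm)
    · refine ((hcont_ne x hx).continuousAt (isOpen_ne.mem_nhds hx)).congr ?_
      filter_upwards [isOpen_ne.mem_nhds hx] with y hy using (hderiv y hy).deriv.symm

end MulSelf

section LogProfile

variable {F : ℝ → ℝ} {c : ℝ}

theorem tendsto_comp_const_mul_log_nhdsNE_zero (hc : 0 < c) (hF : Tendsto F atBot (𝓝 0)) :
    Tendsto (fun x => F (c * log x)) (𝓝[≠] 0) (𝓝 0) :=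
  hF.comp (tendsto_log_nhdsNE_zero.const_mul_atBot hc)

theorem contDiff_one_mul_comp_const_mul_log (hc : 0 < c) (hF : ContDiff ℝ 1 F)
    (hF0 : Tendsto F atBot (𝓝 0)) (hF'0 : Tendsto (deriv F) atBot (𝓝 0)) :
    ContDiff ℝ 1 (fun x => x * F (c * log x)) := by
  have hx_deriv : ∀ x ≠ 0, x * deriv (fun x => F (c * log x)) x = c * deriv F (c * log x) := by
    intro x hx
    have h : HasDerivAt (fun x => F (c * log x)) (deriv F (c * log x) * (c * x⁻¹)) x :=
      (hF.differentiable one_ne_zero (c * log x)).hasDerivAt.comp x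
      ((hasDerivAt_log hx).const_mul c)
    rw [h.deriv]
    field_simp
  refine contDiff_one_mul_self (tendsto_comp_const_mul_log_nhdsNE_zero hc hF0)
    (hF.comp_contDiffOn (contDiffOn_const.mul contDiffOn_log)) ?_
  have hlim := (tendsto_comp_const_mul_log_nhdsNE_zero hc hF'0).const_mul c
  rw [mul_zero] at hlim
  refine hlim.congr' ?_
  filter_upwards [self_mem_nhdsWithin] with x hx using (hx_deriv x hx).symm

end LogProfile

theorem contDiff_one_of_hasDerivAt {f f' : ℝ → ℝ} (hf : ∀ x, HasDerivAt f (f' x) x)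
    (hf' : Continuous f') : ContDiff ℝ 1 f := by
  rw [contDiff_one_iff_deriv, funext fun x => (hf x).deriv]
  exact ⟨fun x => (hf x).differentiableAt, hf'⟩

section InverseProfile

variable {α : ℝ} {d Ginv : ℝ → ℝ}

theorem contDiff_one_of_hasDerivAt_div (hd : Continuous d) (hden : ∀ u, α + d u ≠ 0)
    (hGinv' : ∀ y, HasDerivAt Ginv (Ginv y / (α + d (Ginv y))) y) : ContDiff ℝ 1 Ginv := by
  have hGinv : Continuous Ginv := continuous_iff_continuousAt.2 fun y => (hGinv' y).continuousAt
  exact contDiff_one_of_hasDerivAt hGinv'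
    (hGinv.div (continuous_const.add (hd.comp hGinv)) fun _ => hden _)

theorem tendsto_deriv_atBot_of_hasDerivAt_div (hd : ContinuousAt d 0) (hden : α + d 0 ≠ 0)
    (hGinv' : ∀ y, HasDerivAt Ginv (Ginv y / (α + d (Ginv y))) y)
    (hGinv0 : Tendsto Ginv atBot (𝓝 0)) : Tendsto (deriv Ginv) atBot (𝓝 0) := by
  have hden_lim : Tendsto (fun y => α + d (Ginv y)) atBot (𝓝 (α + d 0)) :=
    tendsto_const_nhds.add (hd.tendsto.comp hGinv0)
  have h := hGinv0.div hden_lim hden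
  rw [zero_div] at h
  exact h.congr fun y => ((hGinv' y).deriv).symm

end InverseProfile

theorem stmt5_general (α l χ : ℝ) (hα : 0 < α) (hl : 0 < l) (hχ : 0 < χ)
    (d : ℝ → ℝ) (hd : Continuous d) (hdnn : ∀ x, 0 ≤ d x)
    (Ginv : ℝ → ℝ) (hGinvPos : ∀ y, 0 < Ginv y)
    (hGinv' : ∀ y, HasDerivAt Ginv (Ginv y / (α + d (Ginv y))) y)
    (hGinv0 : Filter.Tendsto Ginv Filter.atBot (nhds 0))
    (g : ℝ → ℝ)
    (hg : ∀ p : ℝ, g p =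
      if p = 0 then 0 else l * p * Ginv (χ * Real.log |p|)) :
    ContDiff ℝ 1 g ∧ g 0 = 0 ∧ deriv g 0 = 0 ∧ ∀ p ≥ (0:ℝ), 0 ≤ g p := by
  have hg_eq : g = fun p => l * (p * Ginv (χ * log p)) := by
    funext p
    rcases eq_or_ne p 0 with rfl | hp
    · simp [hg]
    · rw [hg, if_neg hp, log_abs, mul_assoc]
  have hden : ∀ u, α + d u ≠ 0 := fun u => by linarith [hdnn u]
  refine ⟨?_, by simp [hg], ?_, fun p hp => ?_⟩
  · rw [hg_eq]
    exact contDiff_const.mul (contDiff_one_mul_comp_const_mul_log hχ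
      (contDiff_one_of_hasDerivAt_div hd hden hGinv')
      hGinv0 (tendsto_deriv_atBot_of_hasDerivAt_div hd.continuousAt (hden 0) hGinv' hGinv0))
  · have hφ0 := tendsto_comp_const_mul_log_nhdsNE_zero hχ hGinv0
    rw [hg_eq, ((hasDerivAt_mul_self_zero hφ0).const_mul l).deriv, mul_zero]
  · rw [hg_eq]
    have := hGinvPos (χ * log p)
    positivity

/-- `g p = l p G⁻¹(χ log |p|)` for `p ≠ 0`, `g 0 = 0`, is `C¹`
with `g 0 = 0`, `g'(0) = 0`, and `g` maps `[0,∞)` into `[0,∞)`. -/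
theorem stmt5 (α l χ : ℝ) (hα : 0 < α) (hl : 0 < l) (hχ : 0 < χ)
    (d : ℝ → ℝ) (hd : Continuous d) (hdnn : ∀ x, 0 ≤ d x)
    (Ginv : ℝ → ℝ) (hGinvPos : ∀ y, 0 < Ginv y)
    (hGinv' : ∀ y, HasDerivAt Ginv (Ginv y / (α + d (Ginv y))) y)
    (hGinv0 : Filter.Tendsto Ginv Filter.atBot (nhds 0))
    (hGinvBound : ∃ Y : ℝ, ∀ y ≤ Y, Ginv y ≤ Real.exp (y / α))
    (g : ℝ → ℝ)
    (hg : ∀ p : ℝ, g p =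
      if p = 0 then 0 else l * p * Ginv (χ * Real.log |p|)) :
    ContDiff ℝ 1 g ∧ g 0 = 0 ∧ deriv g 0 = 0 ∧ ∀ p ≥ (0:ℝ), 0 ≤ g p :=
  stmt5_general α l χ hα hl hχ d hd hdnn Ginv hGinvPos hGinv' hGinv0 g hg
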